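/- Let 𝒯 be a slice of l-subsets of [n] and l ≤ k ≤ n-l. Then the collection C_k(𝒯) of l-ple interval k-subsets of [n] whose left endpoint sets lie in 𝒯 is pairwise non-l-intertwining. -/

import Mathlib

/-!
Suppose `I' ⊆ I \ J` and `J' ⊆ J \ I` intertwine cyclically: `a₁ < b₁ < ⋯ < aₗ < bₗ` with
`aⱼ ∈ I'`, `bⱼ ∈ J'`. Walking backwards from `aⱼ ∈ I`, one meets a left endpoint of `I` before
leaving the arc `(bⱼ₋₁, aⱼ]`, because `bⱼ₋₁ ∉ I`; likewise `J` has a left endpoint in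
`(aⱼ, bⱼ]`. These `2l` endpoints alternate around the circle, and as `I` and `J` have only `l`
left endpoints each, they are all of them: the left endpoint sets intertwine. For `I, J ∈ C_k(𝒯)`
this contradicts the non-intertwining of the slice `𝒯`. Measuring positions from `bₗ + 1` turns
all these arcs into intervals.
-/

/-- The position of `x` in the cyclic order on `ℤ/n` starting at `i`. -/
def ord {n : ℕ} (i x : ZMod n) : ℕ := (x - i).val

/-- Two finite sets of naturals intertwine: they have the same cardinality and their
sorted elements satisfy `a₁ < b₁ < a₂ < b₂ < ⋯ < a_l < b_l`. -/
def NatIntertwines (A B : Finset ℕ) : Prop :=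
  A.card = B.card ∧
    List.Chain' (· < ·)
      (((A.sort (· ≤ ·)).zip (B.sort (· ≤ ·))).flatMap fun p => [p.1, p.2])

/-- Two finite subsets of `ℤ/n` intertwine under some cyclic ordering of `[n]`. -/
def CycIntertwines {n : ℕ} (A B : Finset (ZMod n)) : Prop :=
  ∃ i : ZMod n, NatIntertwines (A.image (ord i)) (B.image (ord i))

/-- Two subsets `I`, `J` of `ℤ/n` are (cyclically) `l`-intertwining: there are
`l`-subsets `I' ⊆ I \ J` and `J' ⊆ J \ I` which intertwine (in either order) under some
cyclic ordering. -/
def CycLIntertwines {n : ℕ} (l : ℕ) (I J : Finset (ZMod n)) : Prop :=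
  ∃ I' J' : Finset (ZMod n), I' ⊆ I \ J ∧ J' ⊆ J \ I ∧ I'.card = l ∧ J'.card = l ∧
    (CycIntertwines I' J' ∨ CycIntertwines J' I')

/-- The set of left endpoints of `S ⊆ ℤ/n`: elements of `S` whose predecessor is not
in `S`. -/
def leftEnd {n : ℕ} (S : Finset (ZMod n)) : Finset (ZMod n) :=
  S.filter fun x => x - 1 ∉ S

/-- The gap vector of a sorted list of positions: consecutive differences minus 2,
cyclically (arithmetic modulo `n`). -/
def phiList (n : ℕ) (L : List ℕ) : List ℕ :=
  (L.zip (L.rotate 1)).map fun p => (p.2 + n - p.1 - 2) % n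

/-- The map `φᵢ` of Definition 3.4: the gap vector of an `l`-subset of `ℤ/n`, listed in
the cyclic order starting at `i`. -/
def phi {n : ℕ} (i : ZMod n) (T : Finset (ZMod n)) : List ℕ :=
  phiList n ((T.image (ord i)).sort (· ≤ ·))

/-- A slice: a non-intertwining collection of `C(n-l-1, l-1)` `l`-subsets of `ℤ/n`, each
with cyclic gaps at least 2, such that for some `i` the gap-vector map `φᵢ` is a bijection
onto the `l`-tuples of nonnegative integers summing to `n - 2l`. -/
def IsSlice (n l : ℕ) (𝒯 : Finset (Finset (ZMod n))) : Prop :=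
  𝒯.card = (n - l - 1).choose (l - 1) ∧
    (∀ T ∈ 𝒯, T.card = l) ∧
    (∀ T ∈ 𝒯, ∀ x ∈ T, x + 1 ∉ T) ∧
    (∀ T ∈ 𝒯, ∀ T' ∈ 𝒯, ¬ CycIntertwines T T') ∧
    ∃ i : ZMod n, Set.BijOn (phi i) ↑𝒯
      {L : List ℕ | L.length = l ∧ L.sum = n - 2 * l}

/-- `C_k(𝒯)`: the `k`-subsets of `ℤ/n` which are `l`-ple intervals whose set of left
endpoints belongs to `𝒯`. -/
def Ck (n k : ℕ) (𝒯 : Finset (Finset (ZMod n))) : Set (Finset (ZMod n)) :=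
  {S : Finset (ZMod n) | S.card = k ∧ leftEnd S ∈ 𝒯}

section Interleave

variable {α β : Type*}

def interleave (ps : List (α × α)) : List α := ps.flatMap fun p => [p.1, p.2]

@[simp] lemma interleave_nil : interleave ([] : List (α × α)) = [] := rfl

@[simp] lemma interleave_cons (p : α × α) (ps : List (α × α)) :
    interleave (p :: ps) = p.1 :: p.2 :: interleave ps := rfl

@[simp] lemma interleave_append (ps qs : List (α × α)) :
    interleave (ps ++ qs) = interleave ps ++ interleave qs :=
  List.flatMap_append

lemma interleave_map (f : α → β) (ps : List (α × α)) :
    interleave (ps.map (Prod.map f f)) = (interleave ps).map f := by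
  induction ps <;> simp [*]

lemma map_fst_sublist_interleave (ps : List (α × α)) :
    (ps.map Prod.fst).Sublist (interleave ps) := by
  induction ps with
  | nil => simp
  | cons p ps ih => exact (ih.cons _).cons₂ _

lemma map_snd_sublist_interleave (ps : List (α × α)) :
    (ps.map Prod.snd).Sublist (interleave ps) := by
  induction ps with
  | nil => simp
  | cons p ps ih => exact (ih.cons₂ _).cons _

variable [Preorder β] {f : α → β} {ps : List (α × α)}

lemma nodup_map_fst_of_pairwise (h : ((interleave ps).map f).Pairwise (· < ·)) :
    (ps.map Prod.fst).Nodup :=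
  List.Nodup.of_map f (h.sublist ((map_fst_sublist_interleave ps).map f)).nodup

lemma nodup_map_snd_of_pairwise (h : ((interleave ps).map f).Pairwise (· < ·)) :
    (ps.map Prod.snd).Nodup :=
  List.Nodup.of_map f (h.sublist ((map_snd_sublist_interleave ps).map f)).nodup

lemma pairwise_map_interleave_cons {a b : α} :
    ((interleave ((a, b) :: ps)).map f).Pairwise (· < ·) ↔
      f a < f b ∧ (∀ z ∈ interleave ps, f b < f z) ∧ ((interleave ps).map f).Pairwise (· < ·) := by
  simp only [interleave_cons, List.map_cons, List.pairwise_cons, List.mem_cons, List.mem_map,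
    forall_eq_or_imp, forall_exists_index, and_imp, forall_apply_eq_imp_iff₂]
  constructor
  · rintro ⟨⟨hab, -⟩, hb, h⟩
    exact ⟨hab, hb, h⟩
  · rintro ⟨hab, hb, h⟩
    exact ⟨⟨hab, fun z hz => hab.trans (hb z hz)⟩, hb, h⟩

lemma le_getLast_snd_of_pairwise (h : ((interleave ps).map f).Pairwise (· < ·))
    (hps : ps ≠ []) :
    ∀ z ∈ interleave ps, f z ≤ f (ps.getLast hps).2 := by
  obtain ⟨qs, q, rfl⟩ := (List.eq_nil_or_concat' ps).resolve_left hps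
  simp only [interleave_append, interleave_cons, interleave_nil, List.map_append, List.map_cons,
    List.map_nil, List.pairwise_append, List.pairwise_pair] at h
  simp only [List.getLast_append_singleton]
  intro z hz
  simp only [interleave_append, interleave_cons, interleave_nil, List.mem_append, List.mem_cons,
    List.not_mem_nil, or_false] at hz
  rcases hz with hz | rfl | rfl
  · exact (h.2.2 _ (List.mem_map_of_mem hz) _ (by simp)).le
  · exact h.2.1.le
  · exact le_rfl

end Interleave

lemma natIntertwines_of_pairwise {ps : List (ℕ × ℕ)} (h : (interleave ps).Pairwise (· < ·)) :
    NatIntertwines (ps.map Prod.fst).toFinset (ps.map Prod.snd).toFinset := by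
  have hfst := h.sublist (map_fst_sublist_interleave ps)
  have hsnd := h.sublist (map_snd_sublist_interleave ps)
  have sort_fst : (ps.map Prod.fst).toFinset.sort (· ≤ ·) = ps.map Prod.fst :=
    (List.toFinset_sort _ hfst.nodup).2 (hfst.imp le_of_lt)
  have sort_snd : (ps.map Prod.snd).toFinset.sort (· ≤ ·) = ps.map Prod.snd :=
    (List.toFinset_sort _ hsnd.nodup).2 (hsnd.imp le_of_lt)
  refine ⟨by simp [List.toFinset_card_of_nodup hfst.nodup, List.toFinset_card_of_nodup hsnd.nodup],
    ?_⟩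
  rw [sort_fst, sort_snd, ← List.unzip_fst, ← List.unzip_snd, List.zip_unzip]
  exact List.isChain_iff_pairwise.2 h

section Cyclic

variable {n : ℕ}

lemma ord_self (c : ZMod n) : ord c c = 0 := by simp [ord]

lemma ord_eq_of_natCast_eq {c x : ZMod n} {k : ℕ} (hk : k < n) (h : (k : ZMod n) = x - c) :
    ord c x = k := by
  rw [ord, ← h, ZMod.val_cast_of_lt hk]

lemma cycIntertwines_of_pairwise (c : ZMod n) {ps : List (ZMod n × ZMod n)}
    (h : ((interleave ps).map (ord c)).Pairwise (· < ·)) :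
    CycIntertwines (ps.map Prod.fst).toFinset (ps.map Prod.snd).toFinset := by
  refine ⟨c, ?_⟩
  have := natIntertwines_of_pairwise (ps := ps.map (Prod.map (ord c) (ord c)))
    (by rwa [interleave_map])
  have image_toFinset (l : List (ZMod n)) :
      l.toFinset.image (ord c) = (l.map (ord c)).toFinset := by
    ext; simp
  rw [image_toFinset, image_toFinset]
  simpa [Function.comp_def] using this

variable [NeZero n]

lemma ord_lt (c x : ZMod n) : ord c x < n := ZMod.val_lt _

lemma natCast_ord (c x : ZMod n) : (ord c x : ZMod n) = x - c := ZMod.natCast_zmod_val _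

lemma add_natCast_ord (c x : ZMod n) : c + (ord c x : ZMod n) = x := by
  rw [natCast_ord, add_sub_cancel]

lemma ord_injective (c : ZMod n) : Function.Injective (ord c) := fun x y h => by
  simpa [natCast_ord] using congrArg (fun k : ℕ => (k : ZMod n)) h

lemma ord_sub_one {c x : ZMod n} (h : 0 < ord c x) : ord c (x - 1) = ord c x - 1 :=
  ord_eq_of_natCast_eq (by have := ord_lt c x; omega) (by
    rw [Nat.cast_sub h, natCast_ord]; push_cast; ring)

lemma ord_add_one {c x : ZMod n} (h : ord c x + 1 < n) : ord c (x + 1) = ord c x + 1 :=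
  ord_eq_of_natCast_eq h (by push_cast [natCast_ord]; ring)

lemma ord_add_one_of_lt {c x z : ZMod n} (h : ord c x < ord c z) :
    ord c (x + 1) = ord c x + 1 :=
  ord_add_one (by have := ord_lt c z; omega)

lemma ord_succ_of_le {i m z : ZMod n} (h : ord i z ≤ ord i m) :
    ord (m + 1) z = ord i z + (n - 1 - ord i m) :=
  ord_eq_of_natCast_eq (by have := ord_lt i m; omega) (by
    have hm : ord i m ≤ n - 1 := by have := ord_lt i m; omega
    rw [Nat.cast_add, Nat.cast_sub hm, Nat.cast_sub NeZero.one_le, natCast_ord, natCast_ord,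
      ZMod.natCast_self]
    ring)

lemma pairwise_map_ord_succ {L : List (ZMod n)} {i m : ZMod n}
    (h : (L.map (ord i)).Pairwise (· < ·)) (hm : ∀ z ∈ L, ord i z ≤ ord i m) :
    (L.map (ord (m + 1))).Pairwise (· < ·) := by
  rw [List.pairwise_map] at h ⊢
  refine h.imp_of_mem fun hx hy hxy => ?_
  rw [ord_succ_of_le (hm _ hx), ord_succ_of_le (hm _ hy)]
  omega

lemma CycIntertwines.card_eq {A B : Finset (ZMod n)} (h : CycIntertwines A B) :
    A.card = B.card := by
  obtain ⟨i, hcard, -⟩ := h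
  rwa [Finset.card_image_of_injective _ (ord_injective i),
    Finset.card_image_of_injective _ (ord_injective i)] at hcard

lemma add_natCast_ord_mem_of_mem_image {A : Finset (ZMod n)} {i : ZMod n} {m : ℕ}
    (hm : m ∈ A.image (ord i)) : i + (m : ZMod n) ∈ A ∧ ord i (i + m) = m := by
  obtain ⟨x, hx, rfl⟩ := Finset.mem_image.1 hm
  rw [add_natCast_ord]
  exact ⟨hx, rfl⟩

theorem CycIntertwines.exists_pairs {A B : Finset (ZMod n)} (h : CycIntertwines A B) :
    ∃ c : ZMod n, ∃ qs : List (ZMod n × ZMod n), qs.length = A.card ∧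
      (∀ p ∈ qs, p.1 ∈ A ∧ p.2 ∈ B) ∧ (qs ≠ [] → c - 1 ∈ B) ∧
      ((interleave qs).map (ord c)).Pairwise (· < ·) := by
  obtain ⟨i, hcard, hchain⟩ := h
  set sA := (A.image (ord i)).sort (· ≤ ·)
  set sB := (B.image (ord i)).sort (· ≤ ·)
  have hlen : sA.length = sB.length := by simpa [sA, sB] using hcard
  have lift : ∀ p ∈ sA.zip sB, (i + (p.1 : ZMod n) ∈ A ∧ ord i (i + p.1) = p.1) ∧
      (i + (p.2 : ZMod n) ∈ B ∧ ord i (i + p.2) = p.2) := fun p hp =>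
    ⟨add_natCast_ord_mem_of_mem_image ((Finset.mem_sort _).1 (List.of_mem_zip hp).1),
      add_natCast_ord_mem_of_mem_image ((Finset.mem_sort _).1 (List.of_mem_zip hp).2)⟩
  set g : ℕ → ZMod n := fun m => i + m
  set qs := (sA.zip sB).map (Prod.map g g)
  have hqs : qs.map (Prod.map (ord i) (ord i)) = sA.zip sB := by
    rw [List.map_map]
    refine (List.map_congr_left fun p hp => ?_).trans (List.map_id _)
    ext <;> simp [g, (lift p hp).1.2, (lift p hp).2.2]
  have hsorted : ((interleave qs).map (ord i)).Pairwise (· < ·) := by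
    rw [← interleave_map, hqs]
    exact List.isChain_iff_pairwise.1 hchain
  have hmem : ∀ p ∈ qs, p.1 ∈ A ∧ p.2 ∈ B := by
    simp only [qs, List.mem_map]
    rintro _ ⟨p, hp, rfl⟩
    exact ⟨(lift p hp).1.1, (lift p hp).2.1⟩
  have hcardA : qs.length = A.card := by
    simp [qs, ← hlen, sA, Finset.card_image_of_injective _ (ord_injective i)]
  rcases eq_or_ne qs [] with hq | hq
  · exact ⟨i, qs, hcardA, hmem, fun h => (h hq).elim, hsorted⟩
  · refine ⟨(qs.getLast hq).2 + 1, qs, hcardA, hmem,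
      fun _ => by simpa using (hmem _ (List.getLast_mem hq)).2, ?_⟩
    exact pairwise_map_ord_succ hsorted (le_getLast_snd_of_pairwise hsorted hq)

theorem exists_mem_leftEnd_of_sub_one_notMem {S : Finset (ZMod n)} {c s x : ZMod n}
    (hs : s - 1 ∉ S) (hx : x ∈ S) (hsx : ord c s ≤ ord c x) :
    ∃ y ∈ leftEnd S, ord c s ≤ ord c y ∧ ord c y ≤ ord c x := by
  induction hd : ord c x using Nat.strong_induction_on generalizing x with
  | _ d ih =>
    by_cases hx1 : x - 1 ∈ S
    · have hlt : ord c s < ord c x := lt_of_le_of_ne hsx fun h =>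
        hs (ord_injective c h ▸ hx1)
      have hx1ord := ord_sub_one (c := c) (x := x) (by omega)
      obtain ⟨y, hy, hsy, hyx⟩ := ih _ (by omega) hx1 (by omega) rfl
      exact ⟨y, hy, hsy, by omega⟩
    · exact ⟨x, Finset.mem_filter.2 ⟨hx, hx1⟩, hsx, hd.le⟩

theorem exists_pairs_mem_leftEnd (c : ZMod n) {I J : Finset (ZMod n)} :
    ∀ (qs : List (ZMod n × ZMod n)) (s : ZMod n), (∀ p ∈ qs, p.1 ∈ I \ J ∧ p.2 ∈ J \ I) →
      (qs ≠ [] → s - 1 ∉ I) → (∀ z ∈ interleave qs, ord c s ≤ ord c z) →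
      ((interleave qs).map (ord c)).Pairwise (· < ·) →
      ∃ ps : List (ZMod n × ZMod n), ps.length = qs.length ∧
        (∀ p ∈ ps, p.1 ∈ leftEnd I ∧ p.2 ∈ leftEnd J) ∧
        (∀ z ∈ interleave ps, ord c s ≤ ord c z) ∧
        ((interleave ps).map (ord c)).Pairwise (· < ·)
  | [], _, _, _, _, _ => ⟨[], rfl, by simp, by simp, by simp⟩
  | (a, b) :: qs, s, hmem, hs, hsq, hsorted => by
    obtain ⟨⟨haIJ, hbJI⟩, hmem⟩ := List.forall_mem_cons.1 hmem
    dsimp only at haIJ hbJI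
    obtain ⟨haI, haJ⟩ := Finset.mem_sdiff.1 haIJ
    obtain ⟨hbJ, hbI⟩ := Finset.mem_sdiff.1 hbJI
    obtain ⟨hab, hbq, hsorted⟩ := pairwise_map_interleave_cons.1 hsorted
    have ha1 := ord_add_one_of_lt hab
    obtain ⟨y, hy, hsy, hya⟩ :=
      exists_mem_leftEnd_of_sub_one_notMem (hs (List.cons_ne_nil _ _)) haI (hsq a (by simp))
    obtain ⟨y', hy', hay', hy'b⟩ :=
      exists_mem_leftEnd_of_sub_one_notMem (c := c) (s := a + 1) (by simpa using haJ) hbJ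
        (by omega)
    have hb1 : ∀ z ∈ interleave qs, ord c (b + 1) ≤ ord c z := fun z hz => by
      rw [ord_add_one_of_lt (hbq z hz)]
      exact hbq z hz
    obtain ⟨ps, hlen, hmem', hbound, hsorted'⟩ :=
      exists_pairs_mem_leftEnd c qs (b + 1) hmem (fun _ => by simpa using hbI) hb1 hsorted
    have hbps : ∀ z ∈ interleave ps, ord c b < ord c z := by
      intro z hz
      -- `ps ≠ []` forces `qs ≠ []`, so `b` is not the last position and `b + 1` does not wrap
      obtain ⟨q, qs', rfl⟩ : ∃ q qs', qs = q :: qs' := List.exists_cons_of_ne_nil (by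
        rintro rfl
        simp_all)
      have := hbound z hz
      rw [ord_add_one_of_lt (hbq q.1 (by simp))] at this
      omega
    refine ⟨(y, y') :: ps, by simp [hlen], ?_, ?_, ?_⟩
    · simpa [hy, hy'] using hmem'
    · simp only [interleave_cons, List.mem_cons, forall_eq_or_imp]
      exact ⟨hsy, by omega, fun z hz => by have := hbps z hz; omega⟩
    · exact pairwise_map_interleave_cons.2
        ⟨by omega, fun z hz => by have := hbps z hz; omega, hsorted'⟩

theorem CycIntertwines.leftEnd_of_subset {I J I' J' : Finset (ZMod n)}
    (h : CycIntertwines I' J') (hI' : I' ⊆ I \ J) (hJ' : J' ⊆ J \ I)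
    (hI : (leftEnd I).card ≤ I'.card) (hJ : (leftEnd J).card ≤ J'.card) :
    CycIntertwines (leftEnd I) (leftEnd J) := by
  obtain ⟨c, qs, hlen, hmem, hc, hsorted⟩ := h.exists_pairs
  obtain ⟨ps, hlen', hmem', -, hsorted'⟩ := exists_pairs_mem_leftEnd c qs c
    (fun p hp => ⟨hI' (hmem p hp).1, hJ' (hmem p hp).2⟩)
    (fun hq => (Finset.mem_sdiff.1 (hJ' (hc hq))).2)
    (fun z _ => by rw [ord_self]; exact Nat.zero_le _) hsorted
  have fst_eq : (ps.map Prod.fst).toFinset = leftEnd I := by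
    refine Finset.eq_of_subset_of_card_le (fun x hx => ?_) ?_
    · obtain ⟨p, hp, rfl⟩ := List.mem_map.1 (List.mem_toFinset.1 hx)
      exact (hmem' p hp).1
    · rwa [List.toFinset_card_of_nodup (nodup_map_fst_of_pairwise hsorted'), List.length_map,
        hlen', hlen]
  have snd_eq : (ps.map Prod.snd).toFinset = leftEnd J := by
    refine Finset.eq_of_subset_of_card_le (fun x hx => ?_) ?_
    · obtain ⟨p, hp, rfl⟩ := List.mem_map.1 (List.mem_toFinset.1 hx)
      exact (hmem' p hp).2
    · rwa [List.toFinset_card_of_nodup (nodup_map_snd_of_pairwise hsorted'), List.length_map,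
        hlen', hlen, h.card_eq]
  rw [← fst_eq, ← snd_eq]
  exact cycIntertwines_of_pairwise c hsorted'

end Cyclic

theorem Ck_of_slice_non_lIntertwining_general (n l k : ℕ) (hn : 0 < n) (𝒯 : Finset (Finset (ZMod n)))
    (h𝒯 : IsSlice n l 𝒯) :
    ∀ I ∈ Ck n k 𝒯, ∀ J ∈ Ck n k 𝒯, ¬ CycLIntertwines l I J := by
  have : NeZero n := ⟨hn.ne'⟩
  obtain ⟨-, hcard, -, hnon, -⟩ := h𝒯
  rintro I ⟨-, hI⟩ J ⟨-, hJ⟩ ⟨I', J', hI', hJ', hcI, hcJ, h | h⟩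
  · exact hnon _ hI _ hJ <| h.leftEnd_of_subset hI' hJ'
      (by rw [hcard _ hI, hcI]) (by rw [hcard _ hJ, hcJ])
  · exact hnon _ hJ _ hI <| h.leftEnd_of_subset hJ' hI'
      (by rw [hcard _ hJ, hcJ]) (by rw [hcard _ hI, hcI])

/-- Theorem 3.8 (non-intertwining): if `𝒯` is a slice of `l`-subsets of `[n]` and
`l ≤ k ≤ n - l`, then the collection `C_k(𝒯)` is pairwise non-`l`-intertwining. -/
theorem Ck_of_slice_non_lIntertwining (n l k : ℕ) (hn : 0 < n) (hl : 2 ≤ l)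
    (hlk : l ≤ k) (hkn : k ≤ n - l) (𝒯 : Finset (Finset (ZMod n)))
    (h𝒯 : IsSlice n l 𝒯) :
    ∀ I ∈ Ck n k 𝒯, ∀ J ∈ Ck n k 𝒯, ¬ CycLIntertwines l I J :=
  Ck_of_slice_non_lIntertwining_general n l k hn 𝒯 h𝒯
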